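/- Let G be a finite directed graph with every vertex of degree-Δ (i.e., d⁻(v) + d⁺(v) = Δ for all v). The uniform distribution is a stationary distribution of the random walk on G if and only if every vertex has nonzero in-degree and nonzero out-degree and for every edge (u,v), d⁺(u) = d⁻(v). -/

import Mathlib

/-!
Summing the stationarity equations over all vertices and swapping the double sum counts the
vertices of nonzero out-degree, so no vertex is a sink; no vertex is a source since an empty
sum is not `1`. For the edge condition, stationarity turns
`∑_{u → v} (d⁺(u) - d⁻(v))² / d⁺(u)` into `∑_{u → v} d⁺(u) - d⁻(v)²`. Summed over `v` this is
`∑ d⁺² - ∑ d⁻²`, which vanishes because `d⁻² - d⁺² = Δ (d⁻ - d⁺)` and `∑ d⁻ = ∑ d⁺`.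
A vanishing sum of nonnegative terms forces `d⁺(u) = d⁻(v)` on every edge.
-/

open Finset

def outdeg {V : Type*} [Fintype V] (A : V → V → Prop) [DecidableRel A] (u : V) : ℕ :=
  (univ.filter (fun v => A u v)).card

def indeg {V : Type*} [Fintype V] (A : V → V → Prop) [DecidableRel A] (v : V) : ℕ :=
  (univ.filter (fun u => A u v)).card

section

variable {V : Type*} [Fintype V] (A : V → V → Prop) [DecidableRel A]

def UniformIsStationary : Prop :=
  ∀ v : V, ∑ u ∈ univ.filter (fun u => A u v), (1 : ℝ) / outdeg A u = 1

lemma sum_sum_filter_adj_comm {M : Type*} [AddCommMonoid M] (f : V → V → M) :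
    ∑ v, ∑ u ∈ univ.filter (fun u => A u v), f u v
      = ∑ u, ∑ v ∈ univ.filter (fun v => A u v), f u v := by
  simp only [sum_filter]
  exact sum_comm

lemma sum_indeg_eq_sum_outdeg : ∑ v, indeg A v = ∑ u, outdeg A u := by
  simp only [indeg, outdeg, card_eq_sum_ones]
  exact sum_sum_filter_adj_comm A fun _ _ => 1

lemma sum_indeg_sq_eq_sum_outdeg_sq {Δ : ℕ} (hreg : ∀ v, indeg A v + outdeg A v = Δ) :
    ∑ v, indeg A v ^ 2 = ∑ u, outdeg A u ^ 2 := by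
  have hsq : ∀ v, (indeg A v : ℤ) ^ 2 - outdeg A v ^ 2 = Δ * ((indeg A v : ℤ) - outdeg A v) := by
    intro v
    rw [← hreg v]
    push_cast
    ring
  have hsum : ∑ v, (indeg A v : ℤ) = ∑ u, (outdeg A u : ℤ) := by
    exact_mod_cast sum_indeg_eq_sum_outdeg A
  zify
  rw [← sub_eq_zero, ← sum_sub_distrib, sum_congr rfl fun v _ => hsq v, ← mul_sum,
    sum_sub_distrib, hsum, sub_self, mul_zero]

lemma sum_sum_outdeg_filter_adj :
    ∑ v, ∑ u ∈ univ.filter (fun u => A u v), outdeg A u = ∑ u, outdeg A u ^ 2 := by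
  rw [sum_sum_filter_adj_comm A fun u _ => outdeg A u]
  simp only [sum_const, smul_eq_mul, outdeg, sq]

lemma sum_sum_inv_outdeg_filter_adj :
    ∑ v, ∑ u ∈ univ.filter (fun u => A u v), (1 : ℝ) / outdeg A u
      = #(univ.filter fun u => outdeg A u ≠ 0) := by
  rw [sum_sum_filter_adj_comm A fun u _ => (1 : ℝ) / outdeg A u, card_filter]
  push_cast
  refine sum_congr rfl fun u _ => ?_
  rw [sum_const, nsmul_eq_mul]
  split_ifs with hu
  · exact mul_one_div_cancel (by exact_mod_cast hu)
  · simp [outdeg, show #(univ.filter fun v => A u v) = 0 from not_not.mp hu]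

variable {A}

lemma outdeg_pos_of_adj {u v : V} (h : A u v) : 0 < outdeg A u :=
  card_pos.mpr ⟨v, by simpa using h⟩

lemma uniformIsStationary_of_outdeg_eq_indeg (hin : ∀ v, indeg A v ≠ 0)
    (hedge : ∀ u v, A u v → outdeg A u = indeg A v) : UniformIsStationary A := by
  intro v
  rw [sum_congr rfl fun u hu => by rw [hedge u v (by simpa using hu)], sum_const, nsmul_eq_mul]
  exact mul_one_div_cancel (by exact_mod_cast hin v)

namespace UniformIsStationary

lemma indeg_ne_zero (h : UniformIsStationary A) (v : V) : indeg A v ≠ 0 := by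
  intro hv
  have hv' := h v
  rw [card_eq_zero.mp hv, sum_empty] at hv'
  exact zero_ne_one hv'

lemma outdeg_ne_zero (h : UniformIsStationary A) (u : V) : outdeg A u ≠ 0 := by
  have hcard : #(univ.filter fun u => outdeg A u ≠ 0) = Fintype.card V := by
    have hsum := sum_sum_inv_outdeg_filter_adj A
    simp only [h _, sum_const, card_univ, nsmul_eq_mul, mul_one] at hsum
    exact_mod_cast hsum.symm
  rw [card_eq_iff_eq_univ, filter_eq_self] at hcard
  exact hcard u (mem_univ u)

lemma sum_sq_div_outdeg (h : UniformIsStationary A) (v : V) :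
    ∑ u ∈ univ.filter (fun u => A u v), ((outdeg A u : ℝ) - indeg A v) ^ 2 / outdeg A u
      = ∑ u ∈ univ.filter (fun u => A u v), (outdeg A u : ℝ) - (indeg A v : ℝ) ^ 2 := by
  have hexpand : ∀ u ∈ univ.filter (fun u => A u v),
      ((outdeg A u : ℝ) - indeg A v) ^ 2 / outdeg A u
        = outdeg A u - 2 * indeg A v + (indeg A v : ℝ) ^ 2 * (1 / outdeg A u) := by
    intro u hu
    have : (outdeg A u : ℝ) ≠ 0 := by
      exact_mod_cast (outdeg_pos_of_adj (by simpa using hu)).ne'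
    field_simp
    ring
  have hweighted : ∑ u ∈ univ.filter (fun u => A u v), (indeg A v : ℝ) ^ 2 * (1 / outdeg A u)
      = (indeg A v : ℝ) ^ 2 := by
    rw [← mul_sum, h v, mul_one]
  rw [sum_congr rfl hexpand, sum_add_distrib, sum_sub_distrib, hweighted, sum_const,
    nsmul_eq_mul]
  change _ - (indeg A v : ℝ) * _ + _ = _
  ring

lemma outdeg_eq_indeg {Δ : ℕ} (hreg : ∀ v, indeg A v + outdeg A v = Δ)
    (h : UniformIsStationary A) {u v : V} (huv : A u v) : outdeg A u = indeg A v := by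
  set dev : V → V → ℝ := fun u v => ((outdeg A u : ℝ) - indeg A v) ^ 2 / outdeg A u
  have hdev_nonneg : ∀ u v, 0 ≤ dev u v := fun _ _ => by positivity
  have htotal : ∑ v, ∑ u ∈ univ.filter (fun u => A u v), dev u v = 0 := by
    simp only [dev, h.sum_sq_div_outdeg, sum_sub_distrib, sub_eq_zero]
    exact_mod_cast (sum_sum_outdeg_filter_adj A).trans (sum_indeg_sq_eq_sum_outdeg_sq A hreg).symm
  have hdev : dev u v = 0 :=
    (sum_eq_zero_iff_of_nonneg fun u _ => hdev_nonneg u v).mp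
      ((sum_eq_zero_iff_of_nonneg fun v _ => sum_nonneg fun u _ => hdev_nonneg u v).mp
        htotal v (mem_univ v)) u (by simpa using huv)
  have hout : (outdeg A u : ℝ) ≠ 0 := by exact_mod_cast (outdeg_pos_of_adj huv).ne'
  simpa [dev, hout, sub_eq_zero] using hdev

end UniformIsStationary

end

theorem stmt2_general {V : Type*} [Fintype V] (A : V → V → Prop) [DecidableRel A]
    (Δ : ℕ)
    (hreg : ∀ v : V, indeg A v + outdeg A v = Δ) :
    (∀ v : V, ∑ u ∈ univ.filter (fun u => A u v), (1 : ℝ) / (outdeg A u) = 1) ↔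
      ((∀ v : V, indeg A v ≠ 0 ∧ outdeg A v ≠ 0) ∧
        ∀ u v : V, A u v → outdeg A u = indeg A v) := by
  change UniformIsStationary A ↔ _
  constructor
  · intro h
    exact ⟨fun v => ⟨h.indeg_ne_zero v, h.outdeg_ne_zero v⟩, fun _ _ => h.outdeg_eq_indeg hreg⟩
  · rintro ⟨hdeg, hedge⟩
    exact uniformIsStationary_of_outdeg_eq_indeg (fun v => (hdeg v).1) hedge

/-- In a degree-Δ oriented graph, the uniform distribution is stationary for the random
walk iff every vertex has nonzero in- and out-degree and every edge `(u,v)` satisfies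
`d⁺(u) = d⁻(v)`. -/
theorem stmt2 {V : Type*} [Fintype V] [Nonempty V] (A : V → V → Prop) [DecidableRel A]
    (Δ : ℕ) (hΔ : 0 < Δ)
    (hreg : ∀ v : V, indeg A v + outdeg A v = Δ) :
    (∀ v : V, ∑ u ∈ univ.filter (fun u => A u v), (1 : ℝ) / (outdeg A u) = 1) ↔
      ((∀ v : V, indeg A v ≠ 0 ∧ outdeg A v ≠ 0) ∧
        ∀ u v : V, A u v → outdeg A u = indeg A v) :=
  stmt2_general A Δ hreg
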